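/- arXiv:2011.02189 — 3 statements merged into one kernel-verified Lean document; each statement's English description precedes it below -/
import Mathlib

section
/- Let α ∈ (0,1], T > 0, and suppose constants m ∈ ℕ, l₂ ≥ 0 and matrix A ∈ ℝ^{n×n}, ρ > 0 satisfy κ := m·l₂ + (1 + ‖I − ρA‖)·T^α / Γ(α+1) < 1. Define the operator Φ on continuous functions x : [0,T] → ℝⁿ by (Φx)(t) = x₀ + Σ_{j=1}^{m} U_j(x(t_j)) − (1/Γ(α)) ∫₀ᵗ (t−s)^{α−1} x(s) ds + (1/Γ(α)) ∫₀ᵗ (t−s)^{α−1} P_K(x(s) − ρAx(s) − ρb) ds, where each U_j is l₂-Lipschitz and 0 < t₁ < ⋯ < t_m < T are fixed. Then Φ is a contraction with constant κ in the supremum norm. -/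
/-!
For `x, y` continuous on `[0, T]` with `M = sup ‖x - y‖`, the three parts of `Φx - Φy` are
estimated separately. The impulses contribute at most `m l₂ M`. The metric projection onto a
convex set is nonexpansive (add the variational inequalities `⟪y - P y, z - P y⟫ ≤ 0` at the two
points), so the projected integrands differ by at most `‖I - ρA‖ M`. Finally
`∫₀ᵗ (t - s)^(α-1) ds = t^α / α ≤ T^α / α` and `α Γ(α) = Γ(α + 1)`, so the fractional integral of a
function bounded by `C` is bounded by `C T^α / Γ(α + 1)`.
-/

open MeasureTheory intervalIntegral

/-- The solution operator Φ of the impulsive fractional projection neural network. -/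
noncomputable def phiOp (n m : ℕ) (α ρ : ℝ) (A : Matrix (Fin n) (Fin n) ℝ)
    (b x₀ : EuclideanSpace ℝ (Fin n))
    (P : EuclideanSpace ℝ (Fin n) → EuclideanSpace ℝ (Fin n))
    (U : Fin m → EuclideanSpace ℝ (Fin n) → EuclideanSpace ℝ (Fin n))
    (tj : Fin m → ℝ) (x : ℝ → EuclideanSpace ℝ (Fin n)) (t : ℝ) :
    EuclideanSpace ℝ (Fin n) :=
  x₀ + (∑ j, U j (x (tj j)))
    - (1 / Real.Gamma α) • (∫ s in (0:ℝ)..t, ((t - s) ^ (α - 1)) • x s)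
    + (1 / Real.Gamma α) •
        (∫ s in (0:ℝ)..t, ((t - s) ^ (α - 1)) •
          P (x s - ρ • (Matrix.toEuclideanCLM (𝕜 := ℝ) A) (x s) - ρ • b))

open scoped RealInnerProductSpace

section MetricProjection

variable {F : Type*} [NormedAddCommGroup F] [InnerProductSpace ℝ F]

def IsMetricProjection (K : Set F) (P : F → F) : Prop :=
  ∀ y, P y ∈ K ∧ ∀ z ∈ K, ‖y - P y‖ ≤ ‖y - z‖

theorem IsMetricProjection.real_inner_le_zero {K : Set F} {P : F → F}
    (hP : IsMetricProjection K P) (hK : Convex ℝ K) (y : F) {z : F} (hz : z ∈ K) :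
    ⟪y - P y, z - P y⟫ ≤ 0 := by
  have : Nonempty K := ⟨⟨P y, (hP y).1⟩⟩
  refine (norm_eq_iInf_iff_real_inner_le_zero hK (hP y).1).1 (le_antisymm ?_ ?_) z hz
  · exact le_ciInf fun w => (hP y).2 w w.2
  · exact ciInf_le ⟨0, by rintro r ⟨w, rfl⟩; exact norm_nonneg _⟩ (⟨P y, (hP y).1⟩ : K)

theorem IsMetricProjection.lipschitzWith_one {K : Set F} {P : F → F}
    (hP : IsMetricProjection K P) (hK : Convex ℝ K) : LipschitzWith 1 P := by
  refine LipschitzWith.mk_one fun u v => ?_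
  simp only [dist_eq_norm]
  have hu := hP.real_inner_le_zero hK u (hP v).1
  have hv := hP.real_inner_le_zero hK v (hP u).1
  have hsq : ‖P u - P v‖ ^ 2 ≤ ‖u - v‖ * ‖P u - P v‖ := by
    refine le_trans ?_ (real_inner_le_norm (u - v) (P u - P v))
    rw [← real_inner_self_eq_norm_sq]
    simp only [inner_sub_left, inner_sub_right] at hu hv ⊢
    linarith [real_inner_comm (P u) (P v), real_inner_comm u (P v), real_inner_comm v (P u)]
  nlinarith [norm_nonneg (P u - P v), norm_nonneg (u - v)]

end MetricProjection

section RiemannLiouville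

variable {E : Type*} [NormedAddCommGroup E] [NormedSpace ℝ E]

noncomputable def riemannLiouvilleIntegral (α : ℝ) (w : ℝ → E) (t : ℝ) : E :=
  (1 / Real.Gamma α) • ∫ s in (0:ℝ)..t, ((t - s) ^ (α - 1)) • w s

theorem intervalIntegrable_sub_rpow {α : ℝ} (hα : 0 < α) (t : ℝ) :
    IntervalIntegrable (fun s => (t - s) ^ (α - 1)) volume 0 t := by
  simpa using (intervalIntegrable_rpow' (a := t) (b := 0) (by linarith : -1 < α - 1)).comp_sub_left t

theorem integral_sub_rpow {α : ℝ} (hα : 0 < α) (t : ℝ) :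
    ∫ s in (0:ℝ)..t, (t - s) ^ (α - 1) = t ^ α / α := by
  rw [intervalIntegral.integral_comp_sub_left (fun s : ℝ => s ^ (α - 1)) t, sub_self, sub_zero,
    integral_rpow (Or.inl (by linarith)), sub_add_cancel, Real.zero_rpow hα.ne', sub_zero]

theorem intervalIntegrable_sub_rpow_smul {α t : ℝ} {w : ℝ → E} (hα : 0 < α) (ht : 0 ≤ t)
    (hw : ContinuousOn w (Set.Icc 0 t)) :
    IntervalIntegrable (fun s => ((t - s) ^ (α - 1)) • w s) volume 0 t :=
  (intervalIntegrable_sub_rpow hα t).smul_continuousOn (by rwa [Set.uIcc_of_le ht])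

theorem norm_integral_sub_rpow_smul_le {α t C : ℝ} {w : ℝ → E} (hα : 0 < α) (ht : 0 ≤ t)
    (hw : ∀ s ∈ Set.Ioc 0 t, ‖w s‖ ≤ C) :
    ‖∫ s in (0:ℝ)..t, ((t - s) ^ (α - 1)) • w s‖ ≤ C * t ^ α / α := by
  have hbound : ∀ᵐ s ∂volume, s ∈ Set.Ioc 0 t →
      ‖((t - s) ^ (α - 1)) • w s‖ ≤ (t - s) ^ (α - 1) * C := by
    refine Filter.Eventually.of_forall fun s hs => ?_
    have hker : 0 ≤ (t - s) ^ (α - 1) := Real.rpow_nonneg (by linarith [hs.2]) _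
    rw [norm_smul, Real.norm_of_nonneg hker]
    exact mul_le_mul_of_nonneg_left (hw s hs) hker
  calc ‖∫ s in (0:ℝ)..t, ((t - s) ^ (α - 1)) • w s‖
      ≤ ∫ s in (0:ℝ)..t, (t - s) ^ (α - 1) * C :=
        norm_integral_le_of_norm_le ht hbound ((intervalIntegrable_sub_rpow hα t).mul_const C)
    _ = C * t ^ α / α := by rw [intervalIntegral.integral_mul_const, integral_sub_rpow hα]; ring

theorem norm_riemannLiouvilleIntegral_le {α t C : ℝ} {w : ℝ → E} (hα : 0 < α) (ht : 0 ≤ t)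
    (hw : ∀ s ∈ Set.Ioc 0 t, ‖w s‖ ≤ C) :
    ‖riemannLiouvilleIntegral α w t‖ ≤ C * t ^ α / Real.Gamma (α + 1) := by
  have hΓ := Real.Gamma_pos_of_pos hα
  rw [riemannLiouvilleIntegral, norm_smul, Real.norm_of_nonneg (by positivity),
    Real.Gamma_add_one hα.ne']
  calc 1 / Real.Gamma α * ‖∫ s in (0:ℝ)..t, ((t - s) ^ (α - 1)) • w s‖
      ≤ 1 / Real.Gamma α * (C * t ^ α / α) := by
        gcongr; exact norm_integral_sub_rpow_smul_le hα ht hw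
    _ = C * t ^ α / (α * Real.Gamma α) := by field_simp

theorem riemannLiouvilleIntegral_sub {α t : ℝ} {f g : ℝ → E} (hα : 0 < α) (ht : 0 ≤ t)
    (hf : ContinuousOn f (Set.Icc 0 t)) (hg : ContinuousOn g (Set.Icc 0 t)) :
    riemannLiouvilleIntegral α f t - riemannLiouvilleIntegral α g t =
      riemannLiouvilleIntegral α (fun s => f s - g s) t := by
  rw [riemannLiouvilleIntegral, riemannLiouvilleIntegral, riemannLiouvilleIntegral, ← smul_sub,
    ← intervalIntegral.integral_sub (intervalIntegrable_sub_rpow_smul hα ht hf)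
      (intervalIntegrable_sub_rpow_smul hα ht hg)]
  simp only [smul_sub]

theorem norm_riemannLiouvilleIntegral_sub_le {α T t C : ℝ} {f g : ℝ → E} (hα : 0 < α)
    (ht : t ∈ Set.Icc 0 T) (hf : ContinuousOn f (Set.Icc 0 T)) (hg : ContinuousOn g (Set.Icc 0 T))
    (hfg : ∀ s ∈ Set.Icc 0 T, ‖f s - g s‖ ≤ C) :
    ‖riemannLiouvilleIntegral α f t - riemannLiouvilleIntegral α g t‖ ≤
      C * T ^ α / Real.Gamma (α + 1) := by
  obtain ⟨ht0, htT⟩ := ht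
  have hsub : Set.Icc 0 t ⊆ Set.Icc 0 T := Set.Icc_subset_Icc le_rfl htT
  have hC : 0 ≤ C := (norm_nonneg _).trans (hfg 0 ⟨le_rfl, ht0.trans htT⟩)
  rw [riemannLiouvilleIntegral_sub hα ht0 (hf.mono hsub) (hg.mono hsub)]
  refine (norm_riemannLiouvilleIntegral_le hα ht0
    fun s hs => hfg s (hsub (Set.Ioc_subset_Icc_self hs))).trans ?_
  have := Real.Gamma_pos_of_pos (by linarith : 0 < α + 1)
  gcongr

end RiemannLiouville

section Lipschitz

variable {E : Type*} [NormedAddCommGroup E]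

theorem norm_sum_sub_le_of_lipschitz {ι : Type*} [Fintype ι] {U : ι → E → E} {l M : ℝ}
    (hl : 0 ≤ l) (hU : ∀ j u v, ‖U j u - U j v‖ ≤ l * ‖u - v‖) {a c : ι → E}
    (hac : ∀ j, ‖a j - c j‖ ≤ M) :
    ‖∑ j, (U j (a j) - U j (c j))‖ ≤ Fintype.card ι * l * M := by
  calc ‖∑ j, (U j (a j) - U j (c j))‖
      ≤ ∑ _j : ι, l * M :=
        (norm_sum_le _ _).trans <| Finset.sum_le_sum fun j _ =>
          (hU j _ _).trans (mul_le_mul_of_nonneg_left (hac j) hl)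
    _ = Fintype.card ι * l * M := by simp [mul_assoc]

theorem LipschitzWith.norm_comp_sub_smul_sub_le [NormedSpace ℝ E] {P : E → E} (hP : LipschitzWith 1 P)
    (L : E →L[ℝ] E) (ρ : ℝ) (c u v : E) :
    ‖P (u - ρ • L u - c) - P (v - ρ • L v - c)‖ ≤ ‖1 - ρ • L‖ * ‖u - v‖ := by
  have hlin : (u - ρ • L u - c) - (v - ρ • L v - c) = (1 - ρ • L) (u - v) := by
    simp only [sub_sub_sub_cancel_right, sub_apply, one_apply_eq_self, smul_apply, map_sub]
  calc ‖P (u - ρ • L u - c) - P (v - ρ • L v - c)‖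
      ≤ ‖(u - ρ • L u - c) - (v - ρ • L v - c)‖ := by
        simpa only [NNReal.coe_one, one_mul] using hP.norm_sub_le _ _
    _ ≤ ‖1 - ρ • L‖ * ‖u - v‖ := hlin ▸ (1 - ρ • L).le_opNorm _

end Lipschitz

theorem norm_phiOp_sub_le {n m : ℕ} {α T l₂ ρ M : ℝ} (hα : 0 < α) (hl₂ : 0 ≤ l₂)
    {A : Matrix (Fin n) (Fin n) ℝ} {b x₀ : EuclideanSpace ℝ (Fin n)}
    {P : EuclideanSpace ℝ (Fin n) → EuclideanSpace ℝ (Fin n)} (hP : LipschitzWith 1 P)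
    {U : Fin m → EuclideanSpace ℝ (Fin n) → EuclideanSpace ℝ (Fin n)}
    (hU : ∀ j u v, ‖U j u - U j v‖ ≤ l₂ * ‖u - v‖)
    {tj : Fin m → ℝ} (htj : ∀ j, tj j ∈ Set.Icc 0 T)
    {x y : ℝ → EuclideanSpace ℝ (Fin n)} (hx : ContinuousOn x (Set.Icc 0 T))
    (hy : ContinuousOn y (Set.Icc 0 T)) (hM : ∀ s ∈ Set.Icc 0 T, ‖x s - y s‖ ≤ M)
    {t : ℝ} (ht : t ∈ Set.Icc 0 T) :
    ‖phiOp n m α ρ A b x₀ P U tj x t - phiOp n m α ρ A b x₀ P U tj y t‖ ≤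
      (m * l₂ + (1 + ‖Matrix.toEuclideanCLM (𝕜 := ℝ) (n := Fin n) (1 - ρ • A)‖) *
        T ^ α / Real.Gamma (α + 1)) * M := by
  set L := Matrix.toEuclideanCLM (𝕜 := ℝ) (n := Fin n) A
  have hB : Matrix.toEuclideanCLM (𝕜 := ℝ) (n := Fin n) (1 - ρ • A) = 1 - ρ • L := by
    rw [map_sub, map_smul, map_one]
  rw [hB]
  set Q := fun v => P (v - ρ • L v - ρ • b)
  have hQ : ContinuousOn (fun s => Q (x s)) (Set.Icc 0 T) ∧
      ContinuousOn (fun s => Q (y s)) (Set.Icc 0 T) := by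
    constructor <;> refine hP.continuous.comp_continuousOn ?_ <;> fun_prop
  have hdiff : phiOp n m α ρ A b x₀ P U tj x t - phiOp n m α ρ A b x₀ P U tj y t =
      ∑ j, (U j (x (tj j)) - U j (y (tj j)))
        - (riemannLiouvilleIntegral α x t - riemannLiouvilleIntegral α y t)
        + (riemannLiouvilleIntegral α (fun s => Q (x s)) t -
            riemannLiouvilleIntegral α (fun s => Q (y s)) t) := by
    simp only [phiOp, riemannLiouvilleIntegral, Finset.sum_sub_distrib, Q, L]
    abel
  have hsum := norm_sum_sub_le_of_lipschitz hl₂ hU fun j => hM (tj j) (htj j)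
  have hself := norm_riemannLiouvilleIntegral_sub_le hα ht hx hy hM
  have hproj := norm_riemannLiouvilleIntegral_sub_le (C := ‖1 - ρ • L‖ * M) hα ht hQ.1 hQ.2
    fun s hs => (hP.norm_comp_sub_smul_sub_le L ρ _ _ _).trans
      (mul_le_mul_of_nonneg_left (hM s hs) (norm_nonneg _))
  rw [Fintype.card_fin] at hsum
  rw [hdiff]
  refine (norm_add_le _ _).trans <| ((add_le_add_left (norm_sub_le _ _) _)).trans ?_
  calc _ ≤ m * l₂ * M + M * T ^ α / Real.Gamma (α + 1) +
          ‖1 - ρ • L‖ * M * T ^ α / Real.Gamma (α + 1) := by gcongr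
    _ = _ := by ring

theorem stmt_5_general (n m : ℕ) (α T l₂ ρ : ℝ) (hα : 0 < α) (hT : 0 < T)
    (hl₂ : 0 ≤ l₂)
    (A : Matrix (Fin n) (Fin n) ℝ) (b x₀ : EuclideanSpace ℝ (Fin n))
    (K : Set (EuclideanSpace ℝ (Fin n)))
    (hKconv : Convex ℝ K)
    (P : EuclideanSpace ℝ (Fin n) → EuclideanSpace ℝ (Fin n))
    (hP : ∀ y, P y ∈ K ∧ ∀ z ∈ K, ‖y - P y‖ ≤ ‖y - z‖)
    (U : Fin m → EuclideanSpace ℝ (Fin n) → EuclideanSpace ℝ (Fin n))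
    (hU : ∀ j u v, ‖U j u - U j v‖ ≤ l₂ * ‖u - v‖)
    (tj : Fin m → ℝ)
    (htj0 : ∀ j, 0 < tj j) (htjT : ∀ j, tj j < T)
    (κ : ℝ)
    (hκdef : κ = m * l₂ +
      (1 + ‖Matrix.toEuclideanCLM (𝕜 := ℝ) (n := Fin n) (1 - ρ • A)‖) *
        T ^ α / Real.Gamma (α + 1)) :
    ∀ x y : ℝ → EuclideanSpace ℝ (Fin n),
      ContinuousOn x (Set.Icc 0 T) → ContinuousOn y (Set.Icc 0 T) →
      (⨆ t : Set.Icc (0:ℝ) T,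
          ‖phiOp n m α ρ A b x₀ P U tj x t - phiOp n m α ρ A b x₀ P U tj y t‖) ≤
        κ * ⨆ t : Set.Icc (0:ℝ) T, ‖x t - y t‖ := by
  intro x y hx hy
  have : Nonempty (Set.Icc (0:ℝ) T) := ⟨⟨0, le_rfl, hT.le⟩⟩
  obtain ⟨C, hC⟩ := isCompact_Icc.exists_bound_of_continuousOn (hx.sub hy)
  have hM : ∀ s ∈ Set.Icc 0 T, ‖x s - y s‖ ≤ ⨆ t : Set.Icc (0:ℝ) T, ‖x t - y t‖ :=
    fun s hs => le_ciSup (f := fun t : Set.Icc (0:ℝ) T => ‖x t - y t‖)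
      ⟨C, by rintro r ⟨t, rfl⟩; exact hC t t.2⟩ ⟨s, hs⟩
  refine ciSup_le fun t => hκdef ▸ norm_phiOp_sub_le hα hl₂
    (IsMetricProjection.lipschitzWith_one (K := K) hP hKconv) hU
    (fun j => ⟨(htj0 j).le, (htjT j).le⟩) hx hy hM t.2

/-- The operator Φ is a κ-contraction in the supremum norm on [0, T], where
κ = m·l₂ + (1 + ‖I − ρA‖)·T^α/Γ(α+1) < 1. -/
theorem stmt_5 (n m : ℕ) (α T l₂ ρ : ℝ) (hα : 0 < α) (hα1 : α ≤ 1) (hT : 0 < T)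
    (hl₂ : 0 ≤ l₂) (hρ : 0 < ρ)
    (A : Matrix (Fin n) (Fin n) ℝ) (b x₀ : EuclideanSpace ℝ (Fin n))
    (K : Set (EuclideanSpace ℝ (Fin n)))
    (hKne : K.Nonempty) (hKc : IsClosed K) (hKconv : Convex ℝ K)
    (P : EuclideanSpace ℝ (Fin n) → EuclideanSpace ℝ (Fin n))
    (hP : ∀ y, P y ∈ K ∧ ∀ z ∈ K, ‖y - P y‖ ≤ ‖y - z‖)
    (U : Fin m → EuclideanSpace ℝ (Fin n) → EuclideanSpace ℝ (Fin n))
    (hU : ∀ j u v, ‖U j u - U j v‖ ≤ l₂ * ‖u - v‖)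
    (tj : Fin m → ℝ) (htj : StrictMono tj)
    (htj0 : ∀ j, 0 < tj j) (htjT : ∀ j, tj j < T)
    (κ : ℝ)
    (hκdef : κ = m * l₂ +
      (1 + ‖Matrix.toEuclideanCLM (𝕜 := ℝ) (n := Fin n) (1 - ρ • A)‖) *
        T ^ α / Real.Gamma (α + 1))
    (hκ : κ < 1) :
    ∀ x y : ℝ → EuclideanSpace ℝ (Fin n),
      ContinuousOn x (Set.Icc 0 T) → ContinuousOn y (Set.Icc 0 T) →
      (⨆ t : Set.Icc (0:ℝ) T,
          ‖phiOp n m α ρ A b x₀ P U tj x t - phiOp n m α ρ A b x₀ P U tj y t‖) ≤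
        κ * ⨆ t : Set.Icc (0:ℝ) T, ‖x t - y t‖ :=
  stmt_5_general n m α T l₂ ρ hα hT hl₂ A b x₀ K hKconv P hP U hU tj htj0 htjT κ hκdef
end

section
/- Let α ∈ (0,1] and x : [0,T] → ℝⁿ continuous. If ‖x(t)‖ ≤ C₀ + (L/Γ(α)) ∫₀ᵗ (t−s)^{α−1} ‖x(s)‖ ds + (D/Γ(α+1)) t^α for all t ∈ [0,T], where C₀, L, D ≥ 0, then ‖x(t)‖ ≤ (C₀ + D·t^α/Γ(α+1)) · E_α(L·t^α) for all t ∈ [0,T], where E_α(z) = Σ_{k≥0} z^k / Γ(αk + 1) is the Mittag-Leffler function. -/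
/-!
Iterating the integral inequality `N` times, starting from a bound `‖x‖ ≤ M` on `[0, T]`, bounds
`‖x t‖` by an explicit function: the Riemann–Liouville kernel maps `t ^ q / Γ(q + 1)` to
`Γ(α) t ^ (q + α) / Γ(q + α + 1)` (a Beta integral). Log-convexity of `Γ` gives
`Γ(α + 1) Γ(α k + 1) ≤ Γ(α (k + 1) + 1)`, which bounds this iterate by a partial sum of
`(C₀ + D t^α / Γ(α + 1)) E_α(L t^α)` plus `M (L t^α)^N / Γ(α N + 1)`; the latter is a term of the
convergent Mittag-Leffler series, so it tends to `0`.
-/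

/-- The one-parameter Mittag-Leffler function E_α(z) = Σ_{k≥0} z^k/Γ(αk+1). -/
noncomputable def mittagLeffler (α z : ℝ) : ℝ :=
  ∑' k : ℕ, z ^ k / Real.Gamma (α * k + 1)

open Real Filter Topology Finset Set MeasureTheory

namespace Real

theorem Gamma_add_one_mul_rpow_le {s a : ℝ} (hs : 0 < s) (ha : 0 < a) :
    Gamma (s + 1) * s ^ a ≤ Gamma (s + 1 + a) := by
  have hΓ : 0 < Gamma (s + 1) := Gamma_pos_of_pos (by linarith)
  have hlog_step : log (Gamma (s + 1)) - log (Gamma s) = log s := by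
    rw [Gamma_add_one hs.ne', log_mul hs.ne' (Gamma_pos_of_pos hs).ne']; ring
  have hslope := convexOn_log_Gamma.slope_mono_adjacent (mem_Ioi.2 hs)
    (mem_Ioi.2 (by linarith : 0 < s + 1 + a)) (lt_add_one s) (lt_add_of_pos_right (s + 1) ha)
  simp only [Function.comp_apply, hlog_step, add_sub_cancel_left, div_one] at hslope
  rw [le_div_iff₀ ha] at hslope
  rw [← log_le_log_iff (by positivity) (Gamma_pos_of_pos (by linarith)),
    log_mul hΓ.ne' (by positivity), log_rpow hs]
  linarith

theorem log_Gamma_add_one_le {c s : ℝ} (hc : 0 ≤ c) (hcs : c ≤ s) (hs : 0 < s) :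
    log (Gamma (c + 1)) ≤ c / s * log (Gamma (s + 1)) := by
  have hconv := convexOn_log_Gamma.2 (mem_Ioi.2 one_pos) (mem_Ioi.2 (by linarith : 0 < s + 1))
    (sub_nonneg.2 ((div_le_one hs).2 hcs)) (div_nonneg hc hs.le) (sub_add_cancel 1 (c / s))
  have hpt : (1 - c / s) • (1 : ℝ) + (c / s) • (s + 1) = c + 1 := by
    simp only [smul_eq_mul]; field_simp; ring
  rw [hpt] at hconv
  simpa only [Function.comp_apply, Gamma_one, log_one, smul_eq_mul, mul_zero, zero_add]
    using hconv

theorem Gamma_add_one_mul_Gamma_add_one_le {a b : ℝ} (ha : 0 ≤ a) (hb : 0 ≤ b) :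
    Gamma (a + 1) * Gamma (b + 1) ≤ Gamma (a + b + 1) := by
  rcases (add_nonneg ha hb).eq_or_lt with hab | hab
  · obtain ⟨rfl, rfl⟩ : a = 0 ∧ b = 0 := ⟨by linarith, by linarith⟩
    simp [Gamma_one]
  have hΓa := Gamma_pos_of_pos (by linarith : 0 < a + 1)
  have hΓb := Gamma_pos_of_pos (by linarith : 0 < b + 1)
  rw [← log_le_log_iff (mul_pos hΓa hΓb) (Gamma_pos_of_pos (by linarith)),
    log_mul hΓa.ne' hΓb.ne']
  have h := add_le_add (log_Gamma_add_one_le ha (le_add_of_nonneg_right hb) hab)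
    (log_Gamma_add_one_le hb (le_add_of_nonneg_left ha) hab)
  rwa [← add_mul, ← add_div, div_self hab.ne', one_mul] at h

end Real

theorem summable_pow_div_Gamma_mul_add_one {α : ℝ} (hα : 0 < α) (z : ℝ) :
    Summable fun k : ℕ => z ^ k / Gamma (α * k + 1) := by
  refine summable_of_ratio_norm_eventually_le (r := 1 / 2) (by norm_num) ?_
  have hgrowth : Tendsto (fun k : ℕ => (α * k) ^ α) atTop atTop :=
    (tendsto_rpow_atTop hα).comp
      ((tendsto_natCast_atTop_atTop (R := ℝ)).const_mul_atTop hα)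
  filter_upwards [hgrowth.eventually_ge_atTop (2 * |z|), eventually_ge_atTop 1] with k hk hk1
  have hαk : 0 < α * k := mul_pos hα (by exact_mod_cast hk1)
  have hΓ : 0 < Gamma (α * k + 1) := Gamma_pos_of_pos (by linarith)
  have hratio := Gamma_add_one_mul_rpow_le hαk hα
  calc ‖z ^ (k + 1) / Gamma (α * ↑(k + 1) + 1)‖
      = |z| ^ k * |z| / Gamma (α * k + 1 + α) := by
        rw [norm_div, norm_pow, norm_eq_abs, norm_eq_abs, pow_succ, Nat.cast_succ,
          abs_of_pos (Gamma_pos_of_pos (by positivity)), mul_add_one, add_right_comm]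
    _ ≤ |z| ^ k * ((α * k) ^ α / 2) / (Gamma (α * k + 1) * (α * k) ^ α) := by
        gcongr
        linarith
    _ = 1 / 2 * ‖z ^ k / Gamma (α * k + 1)‖ := by
        rw [norm_div, norm_pow, norm_eq_abs, norm_eq_abs, abs_of_pos hΓ]
        field_simp

theorem integral_rpow_mul_sub_rpow {a b t : ℝ} (ha : 0 < a) (hb : 0 < b) (ht : 0 < t) :
    ∫ s in (0 : ℝ)..t, s ^ (a - 1) * (t - s) ^ (b - 1)
      = Gamma a * Gamma b / Gamma (a + b) * t ^ (a + b - 1) := by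
  have hbeta := Complex.betaIntegral_scaled a b ht
  rw [Complex.betaIntegral_eq_Gamma_mul_div _ _ (by simpa using ha) (by simpa using hb)] at hbeta
  have hreal : ∫ s in (0 : ℝ)..t, (s : ℂ) ^ ((a : ℂ) - 1) * ((t : ℂ) - s) ^ ((b : ℂ) - 1)
      = ((∫ s in (0 : ℝ)..t, s ^ (a - 1) * (t - s) ^ (b - 1) : ℝ) : ℂ) := by
    rw [← intervalIntegral.integral_ofReal]
    refine intervalIntegral.integral_congr fun s hs => ?_
    rw [uIcc_of_le ht.le] at hs
    simp only [Complex.ofReal_mul, Complex.ofReal_cpow hs.1,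
      Complex.ofReal_cpow (sub_nonneg.2 hs.2), Complex.ofReal_sub, Complex.ofReal_one]
  rw [hreal, ← Complex.ofReal_add, Complex.Gamma_ofReal, Complex.Gamma_ofReal,
    Complex.Gamma_ofReal, ← Complex.ofReal_one, ← Complex.ofReal_sub,
    ← Complex.ofReal_cpow ht.le] at hbeta
  exact_mod_cast hbeta.trans (mul_comm _ _)

noncomputable def fracMonomial (q t : ℝ) : ℝ := t ^ q / Gamma (q + 1)

theorem continuous_fracMonomial {q : ℝ} (hq : 0 ≤ q) : Continuous (fracMonomial q) :=
  (continuous_rpow_const hq).div_const _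

theorem fracMonomial_zero (t : ℝ) : fracMonomial 0 t = 1 := by
  simp [fracMonomial, Gamma_one]

theorem fracMonomial_mul_natCast {α t : ℝ} (ht : 0 ≤ t) (k : ℕ) :
    fracMonomial (α * k) t = (t ^ α) ^ k / Gamma (α * k + 1) := by
  rw [fracMonomial, rpow_mul_natCast ht]

theorem fracMonomial_add_le_mul {p q t : ℝ} (hp : 0 ≤ p) (hq : 0 ≤ q) (ht : 0 ≤ t) :
    fracMonomial (p + q) t ≤ fracMonomial p t * fracMonomial q t := by
  rw [fracMonomial, fracMonomial, fracMonomial, div_mul_div_comm, ← rpow_add_of_nonneg ht hp hq]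
  have hΓ := mul_pos (Gamma_pos_of_pos (by linarith : 0 < p + 1))
    (Gamma_pos_of_pos (by linarith : 0 < q + 1))
  gcongr
  exact Gamma_add_one_mul_Gamma_add_one_le hp hq

theorem intervalIntegrable_sub_rpow_mul {α t : ℝ} (hα : 0 < α) {f : ℝ → ℝ}
    (hf : ContinuousOn f (uIcc 0 t)) :
    IntervalIntegrable (fun s => (t - s) ^ (α - 1) * f s) volume 0 t := by
  have hkernel : IntervalIntegrable (fun s => (t - s) ^ (α - 1)) volume 0 t := by
    simpa using ((intervalIntegral.intervalIntegrable_rpow' (a := 0) (b := t)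
      (by linarith : -1 < α - 1)).comp_sub_left t).symm
  exact hkernel.mul_continuousOn hf

theorem integral_sub_rpow_mul_fracMonomial {α q t : ℝ} (hα : 0 < α) (hq : 0 ≤ q)
    (ht : 0 ≤ t) :
    ∫ s in (0 : ℝ)..t, (t - s) ^ (α - 1) * fracMonomial q s
      = Gamma α * fracMonomial (q + α) t := by
  rcases ht.eq_or_lt with rfl | ht
  · simp [fracMonomial, zero_rpow (by linarith : q + α ≠ 0)]
  have hintegrand : ∀ s, (t - s) ^ (α - 1) * fracMonomial q s
      = s ^ (q + 1 - 1) * (t - s) ^ (α - 1) / Gamma (q + 1) := fun s => by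
    rw [fracMonomial, add_sub_cancel_right]; ring
  simp only [hintegrand]
  rw [intervalIntegral.integral_div, integral_rpow_mul_sub_rpow (by linarith) hα ht,
    fracMonomial, show q + 1 + α - 1 = q + α by ring, show q + 1 + α = q + α + 1 by ring]
  have hΓq := Gamma_pos_of_pos (by linarith : 0 < q + 1)
  field_simp

section Iteration

variable {α C₀ L D M : ℝ}

noncomputable def gronwallIterate (α C₀ L D M : ℝ) (N : ℕ) (t : ℝ) : ℝ :=
  ∑ k ∈ range N, L ^ k * (C₀ * fracMonomial (α * k) t + D * fracMonomial (α * k + α) t)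
    + M * L ^ N * fracMonomial (α * N) t

theorem continuous_gronwallIterate (hα : 0 ≤ α) (N : ℕ) :
    Continuous (gronwallIterate α C₀ L D M N) := by
  have hm : ∀ k : ℕ, Continuous (fracMonomial (α * k)) := fun k =>
    continuous_fracMonomial (by positivity)
  have hm' : ∀ k : ℕ, Continuous (fracMonomial (α * k + α)) := fun k =>
    continuous_fracMonomial (by positivity)
  exact (continuous_finsetSum _ fun k _ => continuous_const.mul
    ((continuous_const.mul (hm k)).add (continuous_const.mul (hm' k)))).add
    (continuous_const.mul (hm N))

theorem gronwallIterate_succ (hα : 0 < α) {t : ℝ} (ht : 0 ≤ t) (N : ℕ) :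
    C₀ + L / Gamma α * (∫ s in (0 : ℝ)..t, (t - s) ^ (α - 1) * gronwallIterate α C₀ L D M N s)
      + D / Gamma (α + 1) * t ^ α = gronwallIterate α C₀ L D M (N + 1) t := by
  have hK : ∀ q, 0 ≤ q → IntervalIntegrable (fun s => (t - s) ^ (α - 1) * fracMonomial q s)
      volume 0 t := fun q hq =>
    intervalIntegrable_sub_rpow_mul hα (continuous_fracMonomial hq).continuousOn
  have hm : ∀ k : ℕ, 0 ≤ α * k := fun k => by positivity
  have hsplit : (fun s => (t - s) ^ (α - 1) * gronwallIterate α C₀ L D M N s) = fun s =>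
      ∑ k ∈ range N, (L ^ k * C₀ * ((t - s) ^ (α - 1) * fracMonomial (α * k) s)
        + L ^ k * D * ((t - s) ^ (α - 1) * fracMonomial (α * k + α) s))
      + M * L ^ N * ((t - s) ^ (α - 1) * fracMonomial (α * N) s) := by
    funext s
    rw [gronwallIterate, mul_add, mul_sum]
    congr 1
    · exact sum_congr rfl fun k _ => by ring
    · ring
  have hintegral : ∫ s in (0 : ℝ)..t, (t - s) ^ (α - 1) * gronwallIterate α C₀ L D M N s
      = Gamma α * (∑ k ∈ range N, L ^ k * (C₀ * fracMonomial (α * k + α) t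
          + D * fracMonomial (α * k + α + α) t) + M * L ^ N * fracMonomial (α * N + α) t) := by
    rw [hsplit, intervalIntegral.integral_add, intervalIntegral.integral_finsetSum,
      intervalIntegral.integral_const_mul, integral_sub_rpow_mul_fracMonomial hα (hm N) ht,
      mul_add, mul_sum]
    · congr 1
      · refine sum_congr rfl fun k _ => ?_
        rw [intervalIntegral.integral_add ((hK _ (hm k)).const_mul _)
            ((hK _ (by linarith [hm k])).const_mul _),
          intervalIntegral.integral_const_mul, intervalIntegral.integral_const_mul,
          integral_sub_rpow_mul_fracMonomial hα (hm k) ht,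
          integral_sub_rpow_mul_fracMonomial hα (by linarith [hm k]) ht]
        ring
      · ring
    · exact fun k _ => ((hK _ (hm k)).const_mul _).add ((hK _ (by linarith [hm k])).const_mul _)
    · simpa only [Finset.sum_fn] using IntervalIntegrable.sum (range N) fun k _ =>
        ((hK _ (hm k)).const_mul (L ^ k * C₀)).add
          ((hK (α * k + α) (by linarith [hm k])).const_mul (L ^ k * D))
    · exact (hK _ (hm N)).const_mul _
  rw [hintegral, ← mul_assoc, div_mul_cancel₀ _ (Gamma_pos_of_pos hα).ne', gronwallIterate,
    sum_range_succ']
  simp only [Nat.cast_succ, Nat.cast_zero, mul_add_one, mul_zero, zero_add, pow_zero,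
    fracMonomial_zero, pow_succ', mul_assoc,
    show fracMonomial α t = t ^ α / Gamma (α + 1) from rfl]
  rw [mul_add L, mul_sum]
  ring

theorem le_gronwallIterate (hα : 0 < α) (hL : 0 ≤ L) {T : ℝ} {u : ℝ → ℝ}
    (hu : ContinuousOn u (Icc 0 T))
    (hineq : ∀ t ∈ Icc (0 : ℝ) T,
      u t ≤ C₀ + L / Gamma α * (∫ s in (0 : ℝ)..t, (t - s) ^ (α - 1) * u s)
        + D / Gamma (α + 1) * t ^ α)
    (hM : ∀ t ∈ Icc (0 : ℝ) T, u t ≤ M) (N : ℕ) :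
    ∀ t ∈ Icc (0 : ℝ) T, u t ≤ gronwallIterate α C₀ L D M N t := by
  induction N with
  | zero => simpa [gronwallIterate, fracMonomial_zero] using hM
  | succ N ih =>
    rintro t ⟨ht0, htT⟩
    have hmono : ∫ s in (0 : ℝ)..t, (t - s) ^ (α - 1) * u s
        ≤ ∫ s in (0 : ℝ)..t, (t - s) ^ (α - 1) * gronwallIterate α C₀ L D M N s :=
      intervalIntegral.integral_mono_on ht0
        (intervalIntegrable_sub_rpow_mul hα
          (hu.mono (by rw [uIcc_of_le ht0]; exact Icc_subset_Icc_right htT)))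
        (intervalIntegrable_sub_rpow_mul hα (continuous_gronwallIterate hα.le N).continuousOn)
        fun s hs => mul_le_mul_of_nonneg_left (ih s ⟨hs.1, hs.2.trans htT⟩)
          (rpow_nonneg (sub_nonneg.2 hs.2) _)
    calc u t ≤ C₀ + L / Gamma α * (∫ s in (0 : ℝ)..t, (t - s) ^ (α - 1) * u s)
          + D / Gamma (α + 1) * t ^ α := hineq t ⟨ht0, htT⟩
      _ ≤ C₀ + L / Gamma α
            * (∫ s in (0 : ℝ)..t, (t - s) ^ (α - 1) * gronwallIterate α C₀ L D M N s)
          + D / Gamma (α + 1) * t ^ α := by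
        gcongr
      _ = gronwallIterate α C₀ L D M (N + 1) t := gronwallIterate_succ hα ht0 N

theorem gronwallIterate_le (hα : 0 < α) (hC₀ : 0 ≤ C₀) (hL : 0 ≤ L) (hD : 0 ≤ D) {t : ℝ}
    (ht : 0 ≤ t) (N : ℕ) :
    gronwallIterate α C₀ L D M N t
      ≤ (C₀ + D * t ^ α / Gamma (α + 1)) * mittagLeffler α (L * t ^ α)
        + M * ((L * t ^ α) ^ N / Gamma (α * N + 1)) := by
  set z := L * t ^ α
  have hm : ∀ k : ℕ, 0 ≤ α * k := fun k => by positivity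
  have hpow : ∀ k : ℕ, L ^ k * fracMonomial (α * k) t = z ^ k / Gamma (α * k + 1) := fun k => by
    rw [fracMonomial_mul_natCast ht, mul_pow]; ring
  have hterm : ∀ k : ℕ, L ^ k * (C₀ * fracMonomial (α * k) t + D * fracMonomial (α * k + α) t)
      ≤ (C₀ + D * t ^ α / Gamma (α + 1)) * (z ^ k / Gamma (α * k + 1)) := fun k => by
    calc L ^ k * (C₀ * fracMonomial (α * k) t + D * fracMonomial (α * k + α) t)
        ≤ L ^ k * (C₀ * fracMonomial (α * k) t
            + D * (fracMonomial (α * k) t * fracMonomial α t)) := by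
          gcongr
          exact fracMonomial_add_le_mul (hm k) hα.le ht
      _ = (C₀ + D * t ^ α / Gamma (α + 1)) * (z ^ k / Gamma (α * k + 1)) := by
          rw [← hpow k]; simp only [fracMonomial]; ring
  have hpartial : ∑ k ∈ range N, z ^ k / Gamma (α * k + 1) ≤ mittagLeffler α z :=
    (summable_pow_div_Gamma_mul_add_one hα z).sum_le_tsum _ fun k _ =>
      div_nonneg (by positivity) (Gamma_pos_of_pos (by linarith [hm k])).le
  calc gronwallIterate α C₀ L D M N t
      ≤ (C₀ + D * t ^ α / Gamma (α + 1)) * ∑ k ∈ range N, z ^ k / Gamma (α * k + 1)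
        + M * (z ^ N / Gamma (α * N + 1)) := by
        rw [gronwallIterate, mul_sum, mul_assoc M, hpow]
        exact add_le_add (sum_le_sum fun k _ => hterm k) le_rfl
    _ ≤ _ := by gcongr

end Iteration

theorem stmt_6_general (n : ℕ) (α T C₀ L D : ℝ) (hα : 0 < α) (hC₀ : 0 ≤ C₀) (hL : 0 ≤ L) (hD : 0 ≤ D)
    (x : ℝ → EuclideanSpace ℝ (Fin n)) (hx : ContinuousOn x (Set.Icc 0 T))
    (hineq : ∀ t ∈ Set.Icc (0:ℝ) T,
      ‖x t‖ ≤ C₀ + (L / Real.Gamma α) * (∫ s in (0:ℝ)..t, (t - s) ^ (α - 1) * ‖x s‖)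
        + (D / Real.Gamma (α + 1)) * t ^ α) :
    ∀ t ∈ Set.Icc (0:ℝ) T,
      ‖x t‖ ≤ (C₀ + D * t ^ α / Real.Gamma (α + 1)) * mittagLeffler α (L * t ^ α) := by
  obtain ⟨M, hM⟩ := isCompact_Icc.exists_bound_of_continuousOn hx
  intro t ht
  have hbound : ∀ N : ℕ, ‖x t‖ ≤ (C₀ + D * t ^ α / Gamma (α + 1)) * mittagLeffler α (L * t ^ α)
      + M * ((L * t ^ α) ^ N / Gamma (α * N + 1)) := fun N =>
    (le_gronwallIterate hα hL hx.norm hineq hM N t ht).trans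
      (gronwallIterate_le hα hC₀ hL hD ht.1 N)
  have htail : Tendsto (fun N : ℕ => M * ((L * t ^ α) ^ N / Gamma (α * N + 1))) atTop (𝓝 0) := by
    simpa using (summable_pow_div_Gamma_mul_add_one hα _).tendsto_atTop_zero.const_mul M
  simpa using ge_of_tendsto' (tendsto_const_nhds.add htail) hbound

/-- Fractional Gronwall inequality: if
‖x(t)‖ ≤ C₀ + (L/Γ(α))∫₀ᵗ(t−s)^{α−1}‖x(s)‖ds + (D/Γ(α+1))t^α on [0,T],
then ‖x(t)‖ ≤ (C₀ + D t^α/Γ(α+1))·E_α(L t^α) on [0,T]. -/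
theorem stmt_6 (n : ℕ) (α T C₀ L D : ℝ) (hα : 0 < α) (hα1 : α ≤ 1) (hT : 0 < T)
    (hC₀ : 0 ≤ C₀) (hL : 0 ≤ L) (hD : 0 ≤ D)
    (x : ℝ → EuclideanSpace ℝ (Fin n)) (hx : ContinuousOn x (Set.Icc 0 T))
    (hineq : ∀ t ∈ Set.Icc (0:ℝ) T,
      ‖x t‖ ≤ C₀ + (L / Real.Gamma α) * (∫ s in (0:ℝ)..t, (t - s) ^ (α - 1) * ‖x s‖)
        + (D / Real.Gamma (α + 1)) * t ^ α) :
    ∀ t ∈ Set.Icc (0:ℝ) T,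
      ‖x t‖ ≤ (C₀ + D * t ^ α / Real.Gamma (α + 1)) * mittagLeffler α (L * t ^ α) :=
  stmt_6_general n α T C₀ L D hα hC₀ hL hD x hx hineq
end

section
/- Let Q ∈ ℝ^{n×n} be symmetric positive definite, A ∈ ℝ^{n×n}, ρ, ρ₂, μ₂ > 0. If the matrix −2Q + ρ₂⁻¹Q² + ρ₂(I − ρA)ᵀ(I − ρA) + μ₂Q is negative semidefinite, then for all y, p ∈ ℝⁿ with ‖p‖ ≤ ‖(I − ρA)y‖, we have −2yᵀQy + 2yᵀQp ≤ −μ₂·yᵀQy. -/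
open Matrix

variable {ι R : Type*} [Fintype ι]

section CommRing

variable [CommRing R]

theorem Matrix.IsSymm.dotProduct_mulVec_comm {Q : Matrix ι ι R} (hQ : Q.IsSymm) (x w : ι → R) :
    x ⬝ᵥ Q *ᵥ w = Q *ᵥ x ⬝ᵥ w := by
  rw [dotProduct_mulVec, ← vecMul_transpose, hQ.eq]

theorem Matrix.IsSymm.dotProduct_sq_mulVec [DecidableEq ι] {Q : Matrix ι ι R} (hQ : Q.IsSymm)
    (y : ι → R) : y ⬝ᵥ (Q ^ 2) *ᵥ y = Q *ᵥ y ⬝ᵥ Q *ᵥ y := by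
  rw [sq, ← mulVec_mulVec, hQ.dotProduct_mulVec_comm]

theorem dotProduct_transpose_mul_self_mulVec (M : Matrix ι ι R) (y : ι → R) :
    y ⬝ᵥ (Mᵀ * M) *ᵥ y = M *ᵥ y ⬝ᵥ M *ᵥ y := by
  rw [← mulVec_mulVec, dotProduct_transpose_mulVec]

end CommRing

section OrderedField

variable [Field R] [LinearOrder R] [IsStrictOrderedRing R]

theorem two_mul_dotProduct_le {c : R} (hc : 0 < c) (u v : ι → R) :
    2 * (u ⬝ᵥ v) ≤ c⁻¹ * (u ⬝ᵥ u) + c * (v ⬝ᵥ v) := by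
  simp only [dotProduct, Finset.mul_sum, ← Finset.sum_add_distrib]
  gcongr with i
  simpa [sq, mul_assoc] using two_mul_le_add_mul_sq (a := u i) (b := v i) (inv_pos.2 hc)

theorem Matrix.IsSymm.two_mul_dotProduct_mulVec_le [DecidableEq ι] {Q M : Matrix ι ι R}
    (hQ : Q.IsSymm) {c : R} (hc : 0 < c) {y p : ι → R} (hp : p ⬝ᵥ p ≤ M *ᵥ y ⬝ᵥ M *ᵥ y) :
    2 * (y ⬝ᵥ Q *ᵥ p) ≤ y ⬝ᵥ (c⁻¹ • Q ^ 2 + c • (Mᵀ * M)) *ᵥ y := by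
  rw [add_mulVec, smul_mulVec, smul_mulVec, dotProduct_add, dotProduct_smul, dotProduct_smul,
    smul_eq_mul, smul_eq_mul, hQ.dotProduct_mulVec_comm, hQ.dotProduct_sq_mulVec,
    dotProduct_transpose_mul_self_mulVec]
  calc 2 * (Q *ᵥ y ⬝ᵥ p) ≤ c⁻¹ * (Q *ᵥ y ⬝ᵥ Q *ᵥ y) + c * (p ⬝ᵥ p) :=
        two_mul_dotProduct_le hc _ _
    _ ≤ c⁻¹ * (Q *ᵥ y ⬝ᵥ Q *ᵥ y) + c * (M *ᵥ y ⬝ᵥ M *ᵥ y) := by gcongr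

end OrderedField

theorem stmt_13_general (n : ℕ) (Q A : Matrix (Fin n) (Fin n) ℝ)
    (hQ : Q.PosDef) (ρ ρ₂ μ₂ : ℝ) (hρ₂ : 0 < ρ₂)
    (hNSD : ∀ z : Fin n → ℝ,
      z ⬝ᵥ ((-2 : ℝ) • Q + ρ₂⁻¹ • Q ^ 2 + ρ₂ • ((1 - ρ • A)ᵀ * (1 - ρ • A))
        + μ₂ • Q).mulVec z ≤ 0) :
    ∀ y p : Fin n → ℝ,
      Real.sqrt (p ⬝ᵥ p) ≤ Real.sqrt (((1 - ρ • A).mulVec y) ⬝ᵥ ((1 - ρ • A).mulVec y)) →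
      -2 * (y ⬝ᵥ Q.mulVec y) + 2 * (y ⬝ᵥ Q.mulVec p) ≤ -μ₂ * (y ⬝ᵥ Q.mulVec y) := by
  intro y p hp
  have hpM : p ⬝ᵥ p ≤ (1 - ρ • A) *ᵥ y ⬝ᵥ (1 - ρ • A) *ᵥ y :=
    (Real.sqrt_le_sqrt_iff (by simpa using dotProduct_self_star_nonneg ((1 - ρ • A) *ᵥ y))).1 hp
  have hYoung := (isHermitian_iff_isSymm.1 hQ.1).two_mul_dotProduct_mulVec_le hρ₂ hpM
  have hN := hNSD y
  simp only [add_mulVec, smul_mulVec, dotProduct_add, dotProduct_smul, smul_eq_mul] at hN hYoung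
  linarith

/-- Lyapunov derivative estimate: if −2Q + ρ₂⁻¹Q² + ρ₂(I−ρA)ᵀ(I−ρA) + μ₂Q is
negative semidefinite, then for all y, p with ‖p‖ ≤ ‖(I−ρA)y‖,
−2yᵀQy + 2yᵀQp ≤ −μ₂·yᵀQy. -/
theorem stmt_13 (n : ℕ) (Q A : Matrix (Fin n) (Fin n) ℝ)
    (hQ : Q.PosDef) (ρ ρ₂ μ₂ : ℝ) (hρ : 0 < ρ) (hρ₂ : 0 < ρ₂) (hμ₂ : 0 < μ₂)
    (hNSD : ∀ z : Fin n → ℝ,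
      z ⬝ᵥ ((-2 : ℝ) • Q + ρ₂⁻¹ • Q ^ 2 + ρ₂ • ((1 - ρ • A)ᵀ * (1 - ρ • A))
        + μ₂ • Q).mulVec z ≤ 0) :
    ∀ y p : Fin n → ℝ,
      Real.sqrt (p ⬝ᵥ p) ≤ Real.sqrt (((1 - ρ • A).mulVec y) ⬝ᵥ ((1 - ρ • A).mulVec y)) →
      -2 * (y ⬝ᵥ Q.mulVec y) + 2 * (y ⬝ᵥ Q.mulVec p) ≤ -μ₂ * (y ⬝ᵥ Q.mulVec y) :=
  stmt_13_general n Q A hQ ρ ρ₂ μ₂ hρ₂ hNSD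
end
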